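/- Let n, p ∈ ℕ, κ = 0, and enumerate I(n,p) = {ξ ∈ ℕ₀^n : |ξ|_1 ≤ p} so that elements are ordered by decreasing number of zero coordinates, grouped by their zero-coordinate sets. Then the matrix K with entries K_{ij} = 2^{n-λ(η_j,0)} η_j^{2ξ_i} (where λ(η,0) counts zero coordinates of η) is block upper-triangular with diagonal blocks 2^{n-k} A_k, where A_k is the matrix generated by {ξ ∈ I(n,p) : λ(ξ,0) = k}; moreover each A_k with 0 < k < n is block diagonal with blocks equal (up to canonical coordinate projection) to the matrix generated by I⁺(n-k, p). Consequently det K = C · ∏_{k=1}^n (det D_k)^{C(n,k)} for a nonzero constant C, where D_k is the matrix generated by I⁺(k,p). -/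

import Mathlib

/-!
Order multi-indices by their supports, using the colexicographic order, which refines inclusion.
The entry `η^{2ξ}` vanishes as soon as some `ξ_l > 0 = η_l`, so `K` is block upper triangular
with respect to this order. On the block of multi-indices with support `S`, restricting to the
coordinates in `S` identifies the index set with `I⁺(#S, p)` and the block with `2^{#S} D_{#S}`.
Every `S ⊆ {1, …, n}` contributes one block (an empty one when `#S > p`), so grouping the
supports by size gives the exponents `C(n, k)`; the support `∅` gives `D_0 = (1)`.
-/

/-- The set I(n,p) of multi-indices ξ ∈ ℕ₀^n with coordinate sum at most p. -/
def Inp (n p : ℕ) : Finset (Fin n → ℕ) :=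
  (Finset.range (p + 1)).biUnion (fun m => Finset.Nat.antidiagonalTuple n m)

/-- The set I⁺(m,p) of vectors in ℕ^m with strictly positive coordinates and
coordinate sum at most p. -/
def Iplus (m p : ℕ) : Finset (Fin m → ℕ) :=
  ((Finset.range (p + 1)).biUnion (fun q => Finset.Nat.antidiagonalTuple m q)).filter
    (fun ξ => ∀ i, 1 ≤ ξ i)

/-- The coefficient matrix K for κ = 0: K_{ξη} = 2^{n-λ(η,0)} η^{2ξ}. -/
noncomputable def Kmat (n p : ℕ) : Matrix ↥(Inp n p) ↥(Inp n p) ℚ :=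
  fun ξ η =>
    2 ^ (n - (Finset.univ.filter (fun l => (η : Fin n → ℕ) l = 0)).card) *
      ∏ l, ((η : Fin n → ℕ) l : ℚ) ^ (2 * (ξ : Fin n → ℕ) l)

/-- The matrix D_k generated by I⁺(k,p): D_{ξη} = η^{2ξ}. -/
noncomputable def Dmat (k p : ℕ) : Matrix ↥(Iplus k p) ↥(Iplus k p) ℚ :=
  fun ξ η => ∏ l, ((η : Fin k → ℕ) l : ℚ) ^ (2 * (ξ : Fin k → ℕ) l)

open Finset

instance Colex.fintype (α : Type*) [Fintype α] : Fintype (Colex α) := ‹Fintype α›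

@[to_additive]
lemma Fintype.prod_finset_apply_card {ι M : Type*} [Fintype ι] [DecidableEq ι] [CommMonoid M]
    (f : ℕ → M) :
    ∏ S : Finset ι, f #S = ∏ k ∈ range (Fintype.card ι + 1), f k ^ (Fintype.card ι).choose k := by
  rw [← powerset_univ, prod_powerset, card_univ]
  exact Finset.prod_congr rfl fun k _ => prod_powersetCard k univ f

section Support

variable {ι : Type*}

def supp [Fintype ι] (ξ : ι → ℕ) : Finset ι := univ.filter (ξ · ≠ 0)

lemma mem_supp [Fintype ι] {ξ : ι → ℕ} {l : ι} : l ∈ supp ξ ↔ ξ l ≠ 0 := by simp [supp]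

lemma eq_zero_of_supp_subset [Fintype ι] {ξ : ι → ℕ} {S : Finset ι} (h : supp ξ ⊆ S) {l : ι}
    (hl : l ∉ S) : ξ l = 0 :=
  not_not.1 (mt mem_supp.2 (mt (@h l) hl))

lemma card_univ_sub_card_filter_eq_zero [Fintype ι] (ξ : ι → ℕ) :
    Fintype.card ι - #(univ.filter (ξ · = 0)) = #(supp ξ) := by
  have := card_filter_add_card_filter_not (s := univ) (ξ · = 0)
  rw [card_univ] at this
  simp only [supp, ne_eq]
  omega

lemma prod_pow_eq_zero_of_not_subset [Fintype ι] {R : Type*} [CommSemiring R] {ξ η : ι → ℕ}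
    (h : ¬ supp ξ ⊆ supp η) : ∏ l, (η l : R) ^ (2 * ξ l) = 0 := by
  obtain ⟨l, hξ, hη⟩ := not_subset.1 h
  rw [mem_supp] at hξ
  rw [mem_supp, not_not] at hη
  exact prod_eq_zero (mem_univ l) (by rw [hη, Nat.cast_zero, zero_pow (by omega)])

variable (S : Finset ι)

noncomputable def restrictFin (ξ : ι → ℕ) : Fin #S → ℕ := fun i => ξ (S.equivFin.symm i)

noncomputable def extendFin [DecidableEq ι] (ζ : Fin #S → ℕ) : ι → ℕ :=
  fun l => if h : l ∈ S then ζ (S.equivFin ⟨l, h⟩) else 0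

@[to_additive]
lemma prod_comp_equivFin_symm [Fintype ι] {M : Type*} [CommMonoid M] {f : ι → M}
    (hf : ∀ l ∉ S, f l = 1) : ∏ i : Fin #S, f (S.equivFin.symm i) = ∏ l, f l := by
  rw [Equiv.prod_comp S.equivFin.symm (fun l : S => f l), prod_coe_sort]
  exact prod_subset (subset_univ S) fun l _ hl => hf l hl

variable {S}

lemma restrictFin_extendFin [DecidableEq ι] (ζ : Fin #S → ℕ) :
    restrictFin S (extendFin S ζ) = ζ := by
  funext i
  simp [restrictFin, extendFin]

lemma extendFin_restrictFin [Fintype ι] [DecidableEq ι] {ξ : ι → ℕ} (h : supp ξ ⊆ S) :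
    extendFin S (restrictFin S ξ) = ξ := by
  funext l
  by_cases hl : l ∈ S
  · simp [extendFin, restrictFin, hl]
  · simp [extendFin, hl, eq_zero_of_supp_subset h hl]

lemma supp_extendFin [Fintype ι] [DecidableEq ι] {ζ : Fin #S → ℕ} (hζ : ∀ i, ζ i ≠ 0) :
    supp (extendFin S ζ) = S := by
  ext l
  by_cases hl : l ∈ S <;> simp [mem_supp, extendFin, hl, hζ]

lemma restrictFin_ne_zero [Fintype ι] {ξ : ι → ℕ} (h : supp ξ = S) (i : Fin #S) :
    restrictFin S ξ i ≠ 0 := by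
  subst h
  exact (mem_supp (ξ := ξ)).1 (equivFin _ |>.symm i).2

lemma sum_restrictFin [Fintype ι] {ξ : ι → ℕ} (h : supp ξ ⊆ S) :
    ∑ i, restrictFin S ξ i = ∑ l, ξ l :=
  sum_comp_equivFin_symm S fun _ hl => eq_zero_of_supp_subset h hl

lemma prod_pow_restrictFin [Fintype ι] {R : Type*} [CommSemiring R] {ξ : ι → ℕ} (η : ι → ℕ)
    (h : supp ξ ⊆ S) :
    ∏ i, (restrictFin S η i : R) ^ (2 * restrictFin S ξ i) = ∏ l, (η l : R) ^ (2 * ξ l) :=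
  prod_comp_equivFin_symm S (f := fun l => (η l : R) ^ (2 * ξ l)) fun _ hl => by
    rw [eq_zero_of_supp_subset h hl, mul_zero, pow_zero]

end Support

lemma mem_Inp {n p : ℕ} {ξ : Fin n → ℕ} : ξ ∈ Inp n p ↔ ∑ i, ξ i ≤ p := by
  simp [Inp, Nat.mem_antidiagonalTuple]

lemma mem_Iplus {k p : ℕ} {ζ : Fin k → ℕ} : ζ ∈ Iplus k p ↔ ∑ i, ζ i ≤ p ∧ ∀ i, ζ i ≠ 0 := by
  simp [Iplus, Nat.mem_antidiagonalTuple, Nat.one_le_iff_ne_zero, and_comm]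

section Kmat

variable {n p : ℕ}

lemma Kmat_apply (ξ η : Inp n p) :
    Kmat n p ξ η = 2 ^ #(supp η.1) * ∏ l, (η.1 l : ℚ) ^ (2 * ξ.1 l) := by
  rw [Kmat, ← card_univ_sub_card_filter_eq_zero, Fintype.card_fin]

lemma Kmat_blockTriangular : (Kmat n p).BlockTriangular fun ξ => toColex (supp ξ.1) := by
  intro ξ η hlt
  rw [Kmat_apply, prod_pow_eq_zero_of_not_subset, mul_zero]
  exact fun h => (Colex.toColex_le_toColex_of_subset h).not_gt hlt

noncomputable def supportBlockEquiv (S : Finset (Fin n)) :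
    {ξ : Inp n p // toColex (supp ξ.1) = toColex S} ≃ Iplus #S p where
  toFun ξ :=
    have hS := toColex_inj.1 ξ.2
    ⟨restrictFin S ξ.1.1,
      mem_Iplus.2 ⟨(sum_restrictFin hS.le).trans_le (mem_Inp.1 ξ.1.2), restrictFin_ne_zero hS⟩⟩
  invFun ζ :=
    have hS := supp_extendFin (mem_Iplus.1 ζ.2).2
    ⟨⟨extendFin S ζ.1, mem_Inp.2 <| by
      rw [← sum_restrictFin hS.le, restrictFin_extendFin]; exact (mem_Iplus.1 ζ.2).1⟩,
      congrArg toColex hS⟩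
  left_inv ξ := Subtype.ext <| Subtype.ext <| extendFin_restrictFin (toColex_inj.1 ξ.2).le
  right_inv ζ := Subtype.ext <| restrictFin_extendFin ζ.1

lemma Kmat_toSquareBlock (S : Finset (Fin n)) :
    (Kmat n p).toSquareBlock (fun ξ => toColex (supp ξ.1)) (toColex S) =
      (2 ^ #S : ℚ) • (Dmat #S p).submatrix (supportBlockEquiv S) (supportBlockEquiv S) := by
  ext ξ η
  rw [Matrix.toSquareBlock_def, Matrix.of_apply, Kmat_apply, toColex_inj.1 η.2,
    Matrix.smul_apply, Matrix.submatrix_apply, smul_eq_mul, Dmat]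
  exact congrArg _ (prod_pow_restrictFin η.1.1 (toColex_inj.1 ξ.2).le).symm

lemma det_Kmat_toSquareBlock (S : Finset (Fin n)) :
    ((Kmat n p).toSquareBlock (fun ξ => toColex (supp ξ.1)) (toColex S)).det =
      (2 ^ #S) ^ #(Iplus #S p) * (Dmat #S p).det := by
  rw [Kmat_toSquareBlock, Matrix.det_smul, Matrix.det_submatrix_equiv_self,
    Fintype.card_congr (supportBlockEquiv S), Fintype.card_coe]

lemma det_Kmat : (Kmat n p).det =
    ∏ k ∈ range (n + 1), ((2 ^ k) ^ #(Iplus k p) * (Dmat k p).det) ^ n.choose k := by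
  rw [Kmat_blockTriangular.det_fintype, ← (toColex : Finset (Fin n) ≃ _).prod_comp]
  simp_rw [det_Kmat_toSquareBlock]
  rw [Fintype.prod_finset_apply_card (fun k => ((2 : ℚ) ^ k) ^ #(Iplus k p) * (Dmat k p).det),
    Fintype.card_fin]

end Kmat

lemma Dmat_zero (p : ℕ) : Dmat 0 p = 1 := by
  ext ξ η
  rw [Subsingleton.elim ξ η, Matrix.one_apply_eq, Dmat, Fin.prod_univ_zero]

theorem detK_factorization_general (n p : ℕ) :
    ∃ C : ℚ, C ≠ 0 ∧
      (Kmat n p).det = C * ∏ k ∈ Finset.Icc 1 n, ((Dmat k p).det) ^ (n.choose k) := by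
  refine ⟨∏ k ∈ range (n + 1), (((2 : ℚ) ^ k) ^ #(Iplus k p)) ^ n.choose k,
    prod_ne_zero_iff.2 fun _ _ => by positivity, ?_⟩
  have hD : ∏ k ∈ range (n + 1), (Dmat k p).det ^ n.choose k =
      ∏ k ∈ Icc 1 n, (Dmat k p).det ^ n.choose k := by
    rw [range_eq_Ico, prod_eq_prod_Ico_succ_bot n.add_one_pos, Dmat_zero, Matrix.det_one, one_pow,
      one_mul, zero_add, Ico_add_one_right_eq_Icc]
  rw [det_Kmat, ← hD, ← prod_mul_distrib]
  simp_rw [mul_pow]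

/-- Structure theorem for K (κ = 0): there is a nonzero constant C with
det K = C · ∏_{k=1}^n (det D_k)^{C(n,k)}, where D_k is generated by I⁺(k,p)
(determinants of empty matrices are 1). -/
theorem detK_factorization (n p : ℕ) (hn : 1 ≤ n) (hp : 1 ≤ p) :
    ∃ C : ℚ, C ≠ 0 ∧
      (Kmat n p).det = C * ∏ k ∈ Finset.Icc 1 n, ((Dmat k p).det) ^ (n.choose k) :=
  detK_factorization_general n p
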